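/- arXiv:2106.00294 — 2 statements merged into one kernel-verified Lean document; each statement's English description precedes it below -/
import Mathlib

section
/- For all real t and integers n ≥ 1, ∑_{k=1}^∞ t^k / (k!(k-1)! Γ(n-k+3/2)) = (t / Γ(n+1/2)) · ₁F₁(1/2 - n, 2; -t), where 1/Γ at nonpositive integer arguments is interpreted as 0. -/
/-- The Kummer confluent hypergeometric function `₁F₁(a, b; z)`. -/
noncomputable def hyp1F1 (a b z : ℝ) : ℝ :=
  ∑' k : ℕ, (ascPochhammer ℝ k).eval a / (ascPochhammer ℝ k).eval b *
    z ^ k / Nat.factorial k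

/-!
The identity holds term by term. Writing `Γ(n + 1/2) = (n - 1/2)(n - 3/2) ⋯ (n - k + 1/2) · Γ(n - k + 1/2)`,
the falling product is `(-1)^k (1/2 - n)_k`, and `(2)_k = (k + 1)!`; the signs cancel against
those of `(-t)^k`. Since `n - 1/2` is never an integer, no factor of the product vanishes.
-/

theorem ascPochhammer_eval_two {S : Type*} [Semiring S] (k : ℕ) :
    (ascPochhammer S k).eval 2 = (k + 1).factorial := by
  have h := Nat.factorial_mul_ascFactorial 1 k
  rw [Nat.factorial_one, one_mul, add_comm 1 k] at h
  exact_mod_cast (ascPochhammer_nat_eq_natCast_ascFactorial S 2 k).trans (congrArg _ h)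

theorem Real.Gamma_add_one_eq_descPochhammer_mul {s : ℝ} (hs : ∀ m : ℕ, s ≠ m) (k : ℕ) :
    Gamma (s + 1) = (descPochhammer ℝ k).eval s * Gamma (s + 1 - k) := by
  induction k with
  | zero => simp
  | succ k ih =>
    have hstep : Gamma (s + 1 - k) = (s - k) * Gamma (s + 1 - (k + 1 : ℕ)) := by
      rw [show s + 1 - k = (s - k) + 1 by ring, Gamma_add_one (sub_ne_zero.mpr (hs k))]
      congr 2
      push_cast
      ring
    rw [ih, hstep, descPochhammer_succ_eval]
    ring

theorem natCast_sub_half_ne_natCast (n m : ℕ) : (n : ℝ) - 1 / 2 ≠ m := by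
  intro h
  have h2 : ((2 * n : ℕ) : ℝ) = ((2 * m + 1 : ℕ) : ℝ) := by push_cast; linarith
  have := Nat.cast_injective h2
  omega

theorem Real.Gamma_natCast_add_half (n k : ℕ) :
    Gamma (n + 1 / 2) =
      (-1) ^ k * (ascPochhammer ℝ k).eval (1 / 2 - (n : ℝ)) * Gamma (n + 1 / 2 - k) := by
  rw [show 1 / 2 - (n : ℝ) = -(n - 1 / 2) by ring, ascPochhammer_eval_neg_eq_descPochhammer,
    ← mul_assoc, ← mul_pow, neg_one_mul, neg_neg, one_pow, one_mul]
  have h := Gamma_add_one_eq_descPochhammer_mul (natCast_sub_half_ne_natCast n) k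
  rwa [show (n : ℝ) - 1 / 2 + 1 = n + 1 / 2 by ring] at h

theorem tsum_eq_hyp1F1_general (n : ℕ) (t : ℝ) :
    ∑' k : ℕ, t ^ (k + 1) /
        (Nat.factorial (k + 1) * Nat.factorial k *
          Real.Gamma ((n : ℝ) - ((k : ℝ) + 1) + 3 / 2)) =
      t / Real.Gamma ((n : ℝ) + 1 / 2) * hyp1F1 (1 / 2 - (n : ℝ)) 2 (-t) := by
  rw [hyp1F1, ← tsum_mul_left]
  refine tsum_congr fun k => ?_
  have hGamma_ne : Real.Gamma ((n : ℝ) + 1 / 2) ≠ 0 := (Real.Gamma_pos_of_pos (by positivity)).ne'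
  rw [Real.Gamma_natCast_add_half n k] at hGamma_ne ⊢
  obtain ⟨⟨hsign, hpoch⟩, hG⟩ := by simpa only [mul_ne_zero_iff] using hGamma_ne
  rw [show (n : ℝ) - ((k : ℝ) + 1) + 3 / 2 = n + 1 / 2 - k by ring, ascPochhammer_eval_two,
    neg_pow t]
  generalize (ascPochhammer ℝ k).eval (1 / 2 - (n : ℝ)) = A at hpoch ⊢
  generalize Real.Gamma ((n : ℝ) + 1 / 2 - k) = G at hG ⊢
  field_simp
  ring

/-- For `n ≥ 1` and real `t`:
`∑_{k=1}^∞ t^k / (k!(k-1)! Γ(n-k+3/2)) = (t/Γ(n+1/2)) ₁F₁(1/2-n, 2; -t)`. -/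
theorem tsum_eq_hyp1F1 (n : ℕ) (hn : 1 ≤ n) (t : ℝ) :
    ∑' k : ℕ, t ^ (k + 1) /
        (Nat.factorial (k + 1) * Nat.factorial k *
          Real.Gamma ((n : ℝ) - ((k : ℝ) + 1) + 3 / 2)) =
      t / Real.Gamma ((n : ℝ) + 1 / 2) * hyp1F1 (1 / 2 - (n : ℝ)) 2 (-t) :=
  tsum_eq_hyp1F1_general n t
end

section
/- Define coefficients g^p_k = (-2)^p / Γ(k-p+1) (with 1/Γ of nonpositive integers equal to 0) and g̃^k_n = (-1)^{n-k} H_{n-k}/Γ(n-k+1) for n ≥ k, g̃^k_n = Γ(k-n) for n < k. Then for all integers k and naturals n, (k−n) g̃^k_n + (−1)^n 2^{−k} g^k_n = g̃^{k+1}_n. -/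
/-- Harmonic number of a nonnegative integer argument (via `toNat`), `H_0 = 0`. -/
noncomputable def harmonicNumberZ (m : ℤ) : ℝ :=
  ∑ i ∈ Finset.range m.toNat, (1 : ℝ) / (i + 1)

/-- `g^k_n = (-2)^k / Γ(n-k+1)`; `Real.Gamma` vanishes at nonpositive integers,
so this is `0` for `n < k`. -/
noncomputable def gCoeff (k : ℤ) (n : ℕ) : ℝ :=
  (-2 : ℝ) ^ k / Real.Gamma ((n : ℝ) - (k : ℝ) + 1)

/-- `g̃^k_n = (-1)^{n-k} H_{n-k}/Γ(n-k+1)` for `n ≥ k`, and `Γ(k-n)` for `n < k`. -/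
noncomputable def gTildeCoeff (k : ℤ) (n : ℕ) : ℝ :=
  if k ≤ (n : ℤ) then
    (-1 : ℝ) ^ ((n : ℤ) - k) * harmonicNumberZ ((n : ℤ) - k) /
      Real.Gamma ((n : ℝ) - (k : ℝ) + 1)
  else Real.Gamma ((k : ℝ) - (n : ℝ))

lemma neg_one_zpow_self_mul (x : ℤ) : (-1 : ℝ) ^ x * (-1 : ℝ) ^ x = 1 := by
  rw [← zpow_add₀ (by norm_num : (-1:ℝ) ≠ 0), ← two_mul, zpow_mul]
  norm_num

/-- `(k−n) g̃^k_n + (−1)^n 2^{−k} g^k_n = g̃^{k+1}_n` for all `k : ℤ`, `n : ℕ`. -/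
theorem gTilde_recurrence (k : ℤ) (n : ℕ) :
    ((k : ℝ) - (n : ℝ)) * gTildeCoeff k n + (-1 : ℝ) ^ n * (2 : ℝ) ^ (-k) * gCoeff k n =
      gTildeCoeff (k + 1) n := by
  rcases le_or_gt k n with hk | hk
  · -- k ≤ n
    obtain ⟨m, hm⟩ : ∃ m : ℕ, (n : ℤ) - k = m :=
      ⟨((n:ℤ) - k).toNat, (Int.toNat_of_nonneg (by omega)).symm⟩
    have hkm : k = (n : ℤ) - m := by omega
    have hR : ((n:ℝ) - (k:ℝ)) = (m : ℝ) := by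
      have := congrArg (Int.cast : ℤ → ℝ) hm; push_cast at this; linarith
    have hGamma : Real.Gamma ((n:ℝ) - (k:ℝ) + 1) = m.factorial := by
      rw [hR]; exact_mod_cast Real.Gamma_nat_eq_factorial m
    have hsign : (-1 : ℝ) ^ ((n : ℤ) - k) = (-1 : ℝ) ^ m := by
      rw [hm, zpow_natCast]
    have hsign2 : (-1 : ℝ) ^ n * (2 : ℝ) ^ (-k) * (-2 : ℝ) ^ k = (-1 : ℝ) ^ m := by
      have h2 : (-2 : ℝ) ^ k = (-1 : ℝ) ^ k * (2 : ℝ) ^ k := by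
        rw [← mul_zpow]; norm_num
      rw [h2]
      have h2' : (2:ℝ) ^ (-k) * (2:ℝ) ^ k = 1 := by
        rw [← zpow_add₀ (by norm_num : (2:ℝ) ≠ 0)]; simp
      have hs : (-1 : ℝ) ^ n * (-1 : ℝ) ^ k = (-1 : ℝ) ^ m := by
        have key : ((-1:ℝ) ^ n * (-1:ℝ) ^ k) * (-1:ℝ) ^ (m:ℤ) = 1 := by
          rw [← zpow_natCast (-1:ℝ) n, mul_assoc,
            ← zpow_add₀ (by norm_num : (-1:ℝ) ≠ 0),
            ← zpow_add₀ (by norm_num : (-1:ℝ) ≠ 0)]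
          have harg : (n:ℤ) + (k + m) = 2 * n := by omega
          rw [harg, zpow_mul]; norm_num
        have hmm := neg_one_zpow_self_mul (m : ℤ)
        have := congrArg (· * (-1:ℝ) ^ (m:ℤ)) key
        simp only [mul_assoc, hmm, one_mul, mul_one] at this
        rw [this, zpow_natCast]
      calc (-1:ℝ)^n * (2:ℝ)^(-k) * ((-1:ℝ)^k * (2:ℝ)^k)
          = ((-1:ℝ)^n * (-1:ℝ)^k) * ((2:ℝ)^(-k) * (2:ℝ)^k) := by ring
        _ = (-1:ℝ)^m := by rw [h2', hs, mul_one]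
    have hH : harmonicNumberZ ((n:ℤ) - k) = ∑ i ∈ Finset.range m, (1:ℝ)/(i+1) := by
      rw [hm]; simp [harmonicNumberZ]
    cases m with
    | zero =>
      rw [gTildeCoeff, gTildeCoeff, gCoeff, if_pos hk, if_neg (by omega)]
      have h0 : (k:ℝ) - (n:ℝ) = 0 := by push_cast at hR; linarith
      have hRHS : ((k+1 : ℤ):ℝ) - (n:ℝ) = 1 := by push_cast; linarith [h0]
      rw [hRHS, Real.Gamma_one, h0, zero_mul, zero_add, hGamma]
      simp only [Nat.factorial_zero, Nat.cast_one, div_one]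
      simpa using hsign2
    | succ p =>
      rw [gTildeCoeff, gTildeCoeff, gCoeff, if_pos hk, if_pos (by omega)]
      have hR1 : (n:ℝ) - ((k+1 : ℤ):ℝ) = (p:ℝ) := by push_cast; push_cast at hR; linarith
      have hGamma1 : Real.Gamma ((n:ℝ) - ((k+1 : ℤ):ℝ) + 1) = p.factorial := by
        rw [hR1]; exact_mod_cast Real.Gamma_nat_eq_factorial p
      have hsign1 : (-1 : ℝ) ^ ((n : ℤ) - (k+1)) = (-1 : ℝ) ^ p := by
        have : (n:ℤ) - (k+1) = p := by omega
        rw [this, zpow_natCast]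
      have hH1 : harmonicNumberZ ((n:ℤ) - (k+1)) = ∑ i ∈ Finset.range p, (1:ℝ)/(i+1) := by
        have : (n:ℤ) - (k+1) = (p : ℤ) := by omega
        rw [this]; simp [harmonicNumberZ]
      rw [hGamma, hGamma1, hsign, hsign1, hH, hH1]
      have hmid : (-1:ℝ)^n * (2:ℝ)^(-k) * ((-2:ℝ)^k / ((p+1).factorial : ℝ))
          = (-1:ℝ)^(p+1) / ((p+1).factorial : ℝ) := by
        rw [← mul_div_assoc, hsign2]
      rw [hmid]
      have hk0 : (k:ℝ) - (n:ℝ) = -((p:ℝ) + 1) := by push_cast at hR; linarith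
      have hfac : ((p+1).factorial : ℝ) = ((p:ℝ) + 1) * p.factorial := by
        rw [Nat.factorial_succ]; push_cast; ring
      have hp1 : (p:ℝ) + 1 ≠ 0 := by positivity
      have hpf : (p.factorial : ℝ) ≠ 0 := by positivity
      rw [hk0, Finset.sum_range_succ, hfac, pow_succ]
      field_simp
      ring
  · -- k > n
    rw [gTildeCoeff, gTildeCoeff, gCoeff, if_neg (by omega), if_neg (by omega)]
    have hG0 : Real.Gamma ((n:ℝ) - (k:ℝ) + 1) = 0 := by
      obtain ⟨p, hp⟩ : ∃ p : ℕ, k - (n:ℤ) - 1 = p :=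
        ⟨(k - n - 1).toNat, (Int.toNat_of_nonneg (by omega)).symm⟩
      have : (n:ℝ) - (k:ℝ) + 1 = -(p:ℝ) := by
        have := congrArg (Int.cast : ℤ → ℝ) hp; push_cast at this; linarith
      rw [this]; exact Real.Gamma_neg_nat_eq_zero p
    rw [hG0, div_zero, mul_zero, add_zero]
    have hne : (k:ℝ) - (n:ℝ) ≠ 0 := by
      have : (n:ℝ) < (k:ℝ) := by exact_mod_cast hk
      linarith
    have := Real.Gamma_add_one hne
    have harg : ((k+1 : ℤ):ℝ) - (n:ℝ) = ((k:ℝ) - (n:ℝ)) + 1 := by push_cast; ring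
    rw [harg, this]
end
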